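/- For the SubsetSum instance, the best diffs from β_S to β_T under the family F(≤≥,+) have cost exactly n if and only if there exists a subset I ⊆ {1,…,n} with Σ_{i∈I} s_i = t. -/

import Mathlib

open scoped Classical

/-- An operation of the family `F(≤≥,+)`: if `dir = true` the condition is `A ≤ a`,
otherwise the condition is `A ≥ a`; the modifier is the increment `B ← B + b`. -/
structure OpIneqAdd where
  dir : Bool
  a : ℝ
  b : ℝ

/-- The condition of an operation, evaluated on an `A`-value `v`. -/
def OpIneqAdd.cond (f : OpIneqAdd) (v : ℤ) : Prop :=
  if f.dir then (v : ℝ) ≤ f.a else f.a ≤ (v : ℝ)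

/-- Applying an operation: every key whose `A`-value satisfies the condition gets
its `B`-value incremented by `b`; other keys are unchanged. -/
noncomputable def OpIneqAdd.apply {K : Type*} (α : K → ℤ) (f : OpIneqAdd) (β : K → ℝ) :
    K → ℝ :=
  fun k => if f.cond (α k) then β k + f.b else β k

/-- Successive application of a finite sequence of operations. -/
noncomputable def applyOpsIneqAdd {K : Type*} (α : K → ℤ) (L : List OpIneqAdd) (β : K → ℝ) :
    K → ℝ :=
  L.foldl (fun β' f => f.apply α β') β

/-- `L` is a diff from `βS` to `βT` under `F(≤≥,+)`. -/
def IsDiffIneqAdd {K : Type*} (α : K → ℤ) (L : List OpIneqAdd) (βS βT : K → ℝ) : Prop :=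
  applyOpsIneqAdd α L βS = βT

/-- `L` is a best diff: a diff of minimum cost (the cost being the number of operations). -/
def IsBestDiffIneqAdd {K : Type*} (α : K → ℤ) (L : List OpIneqAdd) (βS βT : K → ℝ) : Prop :=
  IsDiffIneqAdd α L βS βT ∧
    ∀ L' : List OpIneqAdd, IsDiffIneqAdd α L' βS βT → L.length ≤ L'.length

/-- `A`-values of the SubsetSum instance: `α k = k` on the key set `K = {0,…,n}`. -/
def ssAlpha (n : ℕ) : Fin (n + 1) → ℤ := fun k => ((k : ℕ) : ℤ)

/-- Source `B`-values of the SubsetSum instance: identically `0`. -/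
def ssBS (n : ℕ) : Fin (n + 1) → ℝ := fun _ => 0

/-- Target `B`-values of the SubsetSum instance: `β_T k = b_k = ∑_{ℓ=0}^{k} s ℓ`. -/
noncomputable def ssBT (n : ℕ) (s : ℕ → ℤ) : Fin (n + 1) → ℝ :=
  fun k => ((∑ ℓ ∈ Finset.range ((k : ℕ) + 1), s ℓ : ℤ) : ℝ)

/-! On integer `A`-values an operation `f` adds to the key with `A`-value `v` a step function
`f.contrib v`, which changes only between `f.jump - 1` and `f.jump`, by `f.step`. The target
rises by `s k ≠ 0` between the keys `k - 1` and `k`, so every `k ∈ [1, n]` is the jump of some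
operation: a diff has at least `n` operations, and in one with exactly `n` the jumps are
`1, …, n` without repetition, the operation jumping at `k` having step `s k`. At key `0`, an
operation `A ≤ a` contributes `-step` and an operation `A ≥ a` nothing, so `s 0 = -t` makes
the `k` whose operation has the form `A ≤ a` a subset of sum `t`. Conversely, a subset `I` of
sum `t` gives the diff made of `A ≤ k - 1 : B += -s k` for `k ∈ I` and `A ≥ k : B += s k` for
`k ∉ I`. -/

open Finset

namespace OpIneqAdd

noncomputable def contrib (f : OpIneqAdd) (v : ℤ) : ℝ := if f.cond v then f.b else 0

noncomputable def jump (f : OpIneqAdd) : ℤ := if f.dir then ⌊f.a⌋ + 1 else ⌈f.a⌉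

noncomputable def step (f : OpIneqAdd) : ℝ := if f.dir then -f.b else f.b

lemma cond_iff (f : OpIneqAdd) (v : ℤ) :
    f.cond v ↔ if f.dir then v < f.jump else f.jump ≤ v := by
  unfold cond jump
  cases f.dir <;> simp [Int.le_floor, Int.ceil_le]

lemma contrib_eq (f : OpIneqAdd) (v : ℤ) :
    f.contrib v = (if f.dir then -f.step else 0) + if f.jump ≤ v then f.step else 0 := by
  unfold contrib step
  rw [cond_iff]
  cases f.dir <;> by_cases hv : f.jump ≤ v <;> simp [hv]

lemma contrib_sub_contrib_sub_one (f : OpIneqAdd) (k : ℤ) :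
    f.contrib k - f.contrib (k - 1) = if f.jump = k then f.step else 0 := by
  simp only [contrib_eq]
  by_cases hk : f.jump = k
  · simp [hk]
  · have : f.jump ≤ k ↔ f.jump ≤ k - 1 := by omega
    simp [hk, this]

lemma apply_apply {K : Type*} (α : K → ℤ) (f : OpIneqAdd) (β : K → ℝ) (k : K) :
    f.apply α β k = β k + f.contrib (α k) := by
  unfold apply contrib
  split_ifs <;> simp

def ofJump (d : Bool) (k : ℤ) (c : ℝ) : OpIneqAdd :=
  ⟨d, if d then k - 1 else k, if d then -c else c⟩

@[simp] lemma dir_ofJump (d : Bool) (k : ℤ) (c : ℝ) : (ofJump d k c).dir = d := rfl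

@[simp] lemma jump_ofJump (d : Bool) (k : ℤ) (c : ℝ) : (ofJump d k c).jump = k := by
  cases d <;> simp [ofJump, jump]

@[simp] lemma step_ofJump (d : Bool) (k : ℤ) (c : ℝ) : (ofJump d k c).step = c := by
  cases d <;> simp [ofJump, step]

end OpIneqAdd

open OpIneqAdd

lemma applyOpsIneqAdd_apply {K : Type*} (α : K → ℤ) (L : List OpIneqAdd) (β : K → ℝ)
    (k : K) :
    applyOpsIneqAdd α L β k = β k + ∑ i : Fin L.length, L[i].contrib (α k) := by
  simp only [Fin.getElem_fin]
  rw [Fin.sum_univ_fun_getElem L (·.contrib (α k))]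
  induction L generalizing β with
  | nil => simp [applyOpsIneqAdd]
  | cons f L ih =>
    change applyOpsIneqAdd α L (f.apply α β) k = _
    rw [ih, apply_apply, List.map_cons, List.sum_cons, add_assoc]

section SubsetSum

variable {n : ℕ} {s : ℕ → ℤ} {L : List OpIneqAdd}

lemma isDiffIneqAdd_ss_iff :
    IsDiffIneqAdd (ssAlpha n) L (ssBS n) (ssBT n s) ↔
      ∀ m ≤ n,
        ∑ i : Fin L.length, L[i].contrib m = ∑ ℓ ∈ range (m + 1), (s ℓ : ℝ) := by
  simp only [IsDiffIneqAdd, funext_iff, applyOpsIneqAdd_apply, ssAlpha, ssBS, ssBT,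
    zero_add, Int.cast_sum, Fin.forall_iff, Nat.lt_succ_iff]

lemma sum_step_jump_eq (h : IsDiffIneqAdd (ssAlpha n) L (ssBS n) (ssBT n s)) {k : ℕ}
    (hk : 1 ≤ k) (hkn : k ≤ n) :
    ∑ i : Fin L.length, (if L[i].jump = k then L[i].step else 0) = s k := by
  obtain ⟨j, rfl⟩ : ∃ j, k = j + 1 := ⟨k - 1, by omega⟩
  have hk := isDiffIneqAdd_ss_iff.1 h (j + 1) hkn
  have hj := isDiffIneqAdd_ss_iff.1 h j (by omega)
  push_cast at hk ⊢
  simp only [← contrib_sub_contrib_sub_one, sum_sub_distrib, add_sub_cancel_right, hk, hj,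
    sum_range_succ _ (j + 1), add_sub_cancel_left]

lemma exists_jump_eq (h : IsDiffIneqAdd (ssAlpha n) L (ssBS n) (ssBT n s)) {k : ℕ}
    (hk : 1 ≤ k) (hkn : k ≤ n) (hsk : s k ≠ 0) : ∃ i : Fin L.length, L[i].jump = k := by
  by_contra! hne
  have := sum_step_jump_eq h hk hkn
  rw [sum_eq_zero fun i _ => if_neg (hne i)] at this
  exact hsk (mod_cast this.symm)

lemma Icc_subset_image_jump (h : IsDiffIneqAdd (ssAlpha n) L (ssBS n) (ssBT n s))
    (hs : ∀ i, 1 ≤ i → i ≤ n → s i ≠ 0) :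
    Icc (1 : ℤ) n ⊆ univ.image fun i : Fin L.length => L[i].jump := by
  intro z hz
  rw [mem_Icc] at hz
  lift z to ℕ using by omega
  obtain ⟨i, hi⟩ := exists_jump_eq h (by omega) (by omega) (hs z (by omega) (by omega))
  exact mem_image.2 ⟨i, mem_univ i, hi⟩

lemma le_length_of_isDiffIneqAdd (h : IsDiffIneqAdd (ssAlpha n) L (ssBS n) (ssBT n s))
    (hs : ∀ i, 1 ≤ i → i ≤ n → s i ≠ 0) : n ≤ L.length := by
  simpa using (card_le_card (Icc_subset_image_jump h hs)).trans card_image_le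

lemma image_jump_eq_Icc_of_length_eq (h : IsDiffIneqAdd (ssAlpha n) L (ssBS n) (ssBT n s))
    (hs : ∀ i, 1 ≤ i → i ≤ n → s i ≠ 0) (hlen : L.length = n) :
    (univ.image fun i : Fin L.length => L[i].jump) = Icc (1 : ℤ) n :=
  (eq_of_subset_of_card_le (Icc_subset_image_jump h hs) <| by
    simpa [hlen] using card_image_le (s := univ) (f := fun i : Fin L.length => L[i].jump)).symm

lemma injective_jump_of_length_eq (h : IsDiffIneqAdd (ssAlpha n) L (ssBS n) (ssBT n s))
    (hs : ∀ i, 1 ≤ i → i ≤ n → s i ≠ 0) (hlen : L.length = n) :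
    Function.Injective fun i : Fin L.length => L[i].jump := by
  have hcard := congrArg card (image_jump_eq_Icc_of_length_eq h hs hlen)
  rw [← Set.injOn_univ, ← coe_univ, ← card_image_iff, hcard]
  simp [hlen]

lemma exists_subset_sum_eq_of_length_eq {t : ℤ} (hs0 : s 0 = -t)
    (hs : ∀ i, 1 ≤ i → i ≤ n → s i ≠ 0)
    (h : IsDiffIneqAdd (ssAlpha n) L (ssBS n) (ssBT n s)) (hlen : L.length = n) :
    ∃ I : Finset ℕ, I ⊆ Icc 1 n ∧ ∑ i ∈ I, s i = t := by
  have hjump_mem (i : Fin L.length) : 1 ≤ L[i].jump ∧ L[i].jump ≤ n := by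
    have := mem_image_of_mem (fun i : Fin L.length => L[i].jump) (mem_univ i)
    rwa [image_jump_eq_Icc_of_length_eq h hs hlen, mem_Icc] at this
  have hinj := injective_jump_of_length_eq h hs hlen
  have hstep (i : Fin L.length) : L[i].step = s L[i].jump.toNat := by
    obtain ⟨h1, hn⟩ := hjump_mem i
    have hk := sum_step_jump_eq h (k := L[i].jump.toNat) (by omega) (by omega)
    rwa [Int.toNat_of_nonneg (by omega),
      sum_eq_single i (fun j _ hji => if_neg (hinj.ne hji)) (by simp), if_pos rfl] at hk
  have hjump_pos (i : Fin L.length) : ¬ L[i].jump ≤ 0 := by have := hjump_mem i; omega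
  have h0 := isDiffIneqAdd_ss_iff.1 h 0 n.zero_le
  simp only [contrib_eq, Nat.cast_zero, hjump_pos, if_false, add_zero, hstep, sum_ite,
    sum_const_zero, sum_neg_distrib, zero_add, sum_range_one, hs0, Int.cast_neg, neg_inj] at h0
  refine ⟨(univ.filter fun i : Fin L.length => L[i].dir).image fun i => L[i].jump.toNat, ?_, ?_⟩
  · intro k hk
    obtain ⟨i, -, rfl⟩ := mem_image.1 hk
    have := hjump_mem i
    simp only [mem_Icc]
    omega
  · have hinj' : Function.Injective fun i : Fin L.length => L[i].jump.toNat :=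
      fun i j hij => hinj <| by
        have := hjump_mem i; have := hjump_mem j; dsimp only at hij ⊢; omega
    rw [sum_image fun i _ j _ hij => hinj' hij]
    exact_mod_cast h0

lemma exists_isDiffIneqAdd_length_eq {t : ℤ} (hs0 : s 0 = -t) {I : Finset ℕ}
    (hI : I ⊆ Icc 1 n) (hsum : ∑ i ∈ I, s i = t) :
    ∃ L : List OpIneqAdd, IsDiffIneqAdd (ssAlpha n) L (ssBS n) (ssBT n s) ∧ L.length = n := by
  let op (k : ℕ) : OpIneqAdd := ofJump (decide (k ∈ I)) k (s k)
  refine ⟨(Icc 1 n).toList.map op, isDiffIneqAdd_ss_iff.2 fun m hm => ?_, by simp⟩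
  simp only [Fin.getElem_fin]
  rw [Fin.sum_univ_fun_getElem ((Icc 1 n).toList.map op) (·.contrib m), List.map_map,
    sum_map_toList]
  simp only [Function.comp_apply, op, contrib_eq, dir_ofJump, jump_ofJump, step_ofJump,
    decide_eq_true_eq, Nat.cast_le, sum_add_distrib, ← sum_filter, filter_mem_eq_inter,
    inter_eq_right.2 hI]
  have hfilter : (Icc 1 n).filter (· ≤ m) = Icc 1 m := by
    ext k
    simp only [mem_filter, mem_Icc]
    omega
  rw [hfilter, sum_neg_distrib, sum_range_eq_add_Ico _ (Nat.succ_pos m), Nat.succ_eq_add_one,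
    Ico_add_one_right_eq_Icc]
  push_cast [← hsum, hs0]
  ring

end SubsetSum

theorem subsetSum_best_diff_cost_eq_iff_general (n : ℕ) (s : ℕ → ℤ) (t : ℤ)
    (hs0 : s 0 = -t) (hpos : ∀ i, 1 ≤ i → i ≤ n → 0 < s i) :
    (∃ F : List OpIneqAdd,
        IsBestDiffIneqAdd (ssAlpha n) F (ssBS n) (ssBT n s) ∧ F.length = n) ↔
      ∃ I : Finset ℕ, I ⊆ Finset.Icc 1 n ∧ (∑ i ∈ I, s i) = t := by
  have hs i (h1 : 1 ≤ i) (hn : i ≤ n) : s i ≠ 0 := (hpos i h1 hn).ne'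
  constructor
  · rintro ⟨L, ⟨hL, -⟩, hlen⟩
    exact exists_subset_sum_eq_of_length_eq hs0 hs hL hlen
  · rintro ⟨I, hI, hsum⟩
    obtain ⟨L, hL, hlen⟩ := exists_isDiffIneqAdd_length_eq hs0 hI hsum
    exact ⟨L, ⟨hL, fun L' hL' => hlen ▸ le_length_of_isDiffIneqAdd hL' hs⟩, hlen⟩

/-- For the SubsetSum instance, the best diffs from `β_S` to `β_T` under `F(≤≥,+)` have
cost exactly `n` if and only if there is a subset `I ⊆ {1,…,n}` with `∑_{i ∈ I} s i = t`. -/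
theorem subsetSum_best_diff_cost_eq_iff (n : ℕ) (s : ℕ → ℤ) (t : ℤ)
    (ht : 0 < t) (hs0 : s 0 = -t) (hpos : ∀ i, 1 ≤ i → i ≤ n → 0 < s i) :
    (∃ F : List OpIneqAdd,
        IsBestDiffIneqAdd (ssAlpha n) F (ssBS n) (ssBT n s) ∧ F.length = n) ↔
      ∃ I : Finset ℕ, I ⊆ Finset.Icc 1 n ∧ (∑ i ∈ I, s i) = t :=
  subsetSum_best_diff_cost_eq_iff_general n s t hs0 hpos
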